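/- arXiv:1307.8192 — 5 statements merged into one kernel-verified Lean document; each statement's English description precedes it below -/
import Mathlib

section
/- In Morpion Solitaire 5D, no play of length 133 exists; equivalently, the score of every play of Morpion Solitaire 5D is at most 132. -/
/-- The four directions of Morpion Solitaire. -/
def Dir : Set (ℤ × ℤ) := {(1, 0), (0, 1), (1, 1), (1, -1)}

/-- The line (segment) of length 5 starting at `q` in direction `d`:
the set `{q + t • d : t ∈ {0,1,2,3,4}}`. -/
def seg (q d : ℤ × ℤ) : Set (ℤ × ℤ) := {p | ∃ t : ℕ, t ≤ 4 ∧ p = q + (t : ℤ) • d}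

/-- The initial configuration of 36 crosses. -/
def S0 : Set (ℤ × ℤ) := {p |
  ((p.2 = 0 ∨ p.2 = 9) ∧ 3 ≤ p.1 ∧ p.1 ≤ 6) ∨
  ((p.1 = 0 ∨ p.1 = 9) ∧ 3 ≤ p.2 ∧ p.2 ≤ 6) ∨
  ((p.1 = 3 ∨ p.1 = 6) ∧ ((0 ≤ p.2 ∧ p.2 ≤ 3) ∨ (6 ≤ p.2 ∧ p.2 ≤ 9))) ∨
  ((p.2 = 3 ∨ p.2 = 6) ∧ ((0 ≤ p.1 ∧ p.1 ≤ 3) ∨ (6 ≤ p.1 ∧ p.1 ≤ 9)))}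

/-- A play of Morpion Solitaire 5D of length `N`: crosses `p i`, and lines
`seg (q i) (d i)` in directions `d i ∈ Dir`, subject to the rules of 5D.
(Index `i : Fin N` corresponds to move `i + 1`.) -/
structure Play (N : ℕ) where
  p : Fin N → ℤ × ℤ
  q : Fin N → ℤ × ℤ
  d : Fin N → ℤ × ℤ
  d_mem : ∀ i, d i ∈ Dir
  /-- rule (1): the new cross is placed on an empty point -/
  p_not_S0 : ∀ i, p i ∉ S0
  p_new : ∀ i j : Fin N, j < i → p j ≠ p i
  /-- rule (2): the new line passes through the new cross -/
  p_mem : ∀ i, p i ∈ seg (q i) (d i)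
  /-- rule (3): the new line passes only through existing crosses -/
  seg_sub : ∀ i, seg (q i) (d i) ⊆ S0 ∪ {x | ∃ j : Fin N, j ≤ i ∧ p j = x}
  /-- rule (4): two lines in the same direction are disjoint -/
  disj : ∀ i j : Fin N, j < i → d j = d i → seg (q i) (d i) ∩ seg (q j) (d j) = ∅

/-!
All lines drawn in one direction `v` are pairwise disjoint 5-point sets, and they consist of
initial crosses and of crosses placed no later than the last move in direction `v`. If that move
is the `T_v`-th one, this gives `5 n_v ≤ 36 + T_v`, where `n_v` is the number of moves in
direction `v`. The times `T_v` of the directions in use are distinct and at most `N`, so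
`N = Σ n_v ≤ Σ ⌊(36 + T_v) / 5⌋ ≤ Σ_{k < 4} ⌊(36 + N - k) / 5⌋`, which forces `N ≤ 132`.
-/

open Finset

def segFinset (q d : ℤ × ℤ) : Finset (ℤ × ℤ) := (range 5).image fun t : ℕ => q + (t : ℤ) • d

lemma coe_segFinset (q d : ℤ × ℤ) : (segFinset q d : Set (ℤ × ℤ)) = seg q d := by
  ext x
  simp [segFinset, seg, Nat.lt_succ_iff, eq_comm]

lemma card_segFinset (q : ℤ × ℤ) {d : ℤ × ℤ} (hd : d ≠ 0) : #(segFinset q d) = 5 := by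
  rw [segFinset, card_image_of_injective _ ?_, card_range]
  exact (add_right_injective q).comp ((smul_left_injective ℤ hd).comp Nat.cast_injective)

lemma ne_zero_of_mem_Dir {d : ℤ × ℤ} (hd : d ∈ Dir) : d ≠ 0 := by
  rcases hd with rfl | rfl | rfl | rfl <;> decide

instance : DecidablePred (· ∈ S0) := fun _ => by unfold S0; infer_instance

noncomputable def S0Finset : Finset (ℤ × ℤ) := (Icc 0 9 ×ˢ Icc 0 9).filter (· ∈ S0)

lemma coe_S0Finset : (S0Finset : Set (ℤ × ℤ)) = S0 := by
  ext ⟨x, y⟩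
  simp only [S0Finset, coe_filter, mem_product, mem_Icc, Set.mem_ofPred_eq, and_iff_right_iff_imp]
  intro h
  simp only [S0, Set.mem_ofPred_eq] at h
  omega

lemma card_S0Finset : #S0Finset = 36 := by decide

namespace Play

variable {N : ℕ} (P : Play N)

def movesIn (v : ℤ × ℤ) : Finset (Fin N) := {i | P.d i = v}

@[simp]
lemma mem_movesIn {v : ℤ × ℤ} {i : Fin N} : i ∈ P.movesIn v ↔ P.d i = v := mem_filter_univ _

/-- The number of moves made up to and including the last move in direction `v`
(zero if there is none). -/
def lastTime (v : ℤ × ℤ) : ℕ := (P.movesIn v).sup fun i => i.val + 1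

lemma disjoint_segFinset {i j : Fin N} (hij : i ≠ j) (hd : P.d i = P.d j) :
    Disjoint (segFinset (P.q i) (P.d i)) (segFinset (P.q j) (P.d j)) := by
  rw [← disjoint_coe, coe_segFinset, coe_segFinset, Set.disjoint_iff_inter_eq_empty]
  rcases hij.lt_or_gt with h | h
  · rw [Set.inter_comm]
    exact P.disj j i h hd
  · exact P.disj i j h hd.symm

lemma segFinset_subset_of_lt {i : Fin N} {t : ℕ} (hi : i.val < t) :
    segFinset (P.q i) (P.d i) ⊆
      S0Finset ∪ ({j : Fin N | j.val < t} : Finset (Fin N)).image P.p := by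
  intro x hx
  rw [← mem_coe, coe_segFinset] at hx
  rcases P.seg_sub i hx with h | ⟨j, hji, rfl⟩
  · exact mem_union_left _ (by rwa [← mem_coe, coe_S0Finset])
  · exact mem_union_right _ (mem_image_of_mem _ (by simp only [mem_filter_univ]; omega))

lemma five_mul_card_movesIn_le {v : ℤ × ℤ} {t : ℕ} (ht : ∀ i ∈ P.movesIn v, i.val < t) :
    5 * #(P.movesIn v) ≤ 36 + t := by
  set lines := (P.movesIn v).biUnion fun i => segFinset (P.q i) (P.d i)
  have hdisj : (P.movesIn v : Set (Fin N)).PairwiseDisjoint fun i => segFinset (P.q i) (P.d i) :=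
    fun i hi j hj hij => P.disjoint_segFinset hij
      ((P.mem_movesIn.1 hi).trans (P.mem_movesIn.1 hj).symm)
  calc 5 * #(P.movesIn v) = #lines := by
        rw [card_biUnion hdisj,
          sum_congr rfl fun i _ => card_segFinset _ (ne_zero_of_mem_Dir (P.d_mem i)),
          sum_const, smul_eq_mul, mul_comm]
    _ ≤ #(S0Finset ∪ ({j : Fin N | j.val < t} : Finset (Fin N)).image P.p) :=
        card_le_card (biUnion_subset.2 fun i hi => P.segFinset_subset_of_lt (ht i hi))
    _ ≤ 36 + t := by
        grw [card_union_le, card_S0Finset, card_image_le, Fin.card_filter_val_lt, min_le_right]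

lemma lt_lastTime {v : ℤ × ℤ} {i : Fin N} (hi : i ∈ P.movesIn v) : i.val < P.lastTime v :=
  le_sup (f := fun i : Fin N => i.val + 1) hi

lemma lastTime_le (v : ℤ × ℤ) : P.lastTime v ≤ N :=
  Finset.sup_le fun i _ => i.isLt

lemma exists_lastTime_eq {v : ℤ × ℤ} (h : P.lastTime v ≠ 0) :
    ∃ i : Fin N, P.d i = v ∧ P.lastTime v = i.val + 1 := by
  have hne : (P.movesIn v).Nonempty := nonempty_iff_ne_empty.2 fun he => h (by simp [lastTime, he])
  obtain ⟨i, hi, heq⟩ := exists_mem_eq_sup _ hne fun i : Fin N => i.val + 1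
  exact ⟨i, P.mem_movesIn.1 hi, heq⟩

lemma lastTime_eq_zero_of_eq {v w : ℤ × ℤ} (hvw : v ≠ w) (h : P.lastTime v = P.lastTime w) :
    P.lastTime v = 0 := by
  by_contra h0
  obtain ⟨i, rfl, hi⟩ := P.exists_lastTime_eq h0
  obtain ⟨j, rfl, hj⟩ := P.exists_lastTime_eq (h ▸ h0)
  exact hvw (congrArg P.d (Fin.ext (by omega)))

lemma card_movesIn_add :
    #(P.movesIn (1, 0)) + #(P.movesIn (0, 1)) + #(P.movesIn (1, 1)) + #(P.movesIn (1, -1)) = N := by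
  have := card_eq_sum_card_fiberwise (s := univ)
    (t := ({(1, 0), (0, 1), (1, 1), (1, -1)} : Finset (ℤ × ℤ))) fun i _ => by
      simpa [Dir] using P.d_mem i
  rw [card_univ, Fintype.card_fin] at this
  simp [this, movesIn, add_assoc]

end Play

/-- In Morpion Solitaire 5D, the score of every play is at most 132;
equivalently, no play of length 133 exists. -/
theorem morpion5D_upper_bound_132 : ∀ N : ℕ, Play N → N ≤ 132 := by
  intro N P
  have bound (v : ℤ × ℤ) : 5 * #(P.movesIn v) ≤ 36 + P.lastTime v ∧ P.lastTime v ≤ N :=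
    ⟨P.five_mul_card_movesIn_le fun _ => P.lt_lastTime, P.lastTime_le v⟩
  have h₁ := bound (1, 0)
  have h₂ := bound (0, 1)
  have h₃ := bound (1, 1)
  have h₄ := bound (1, -1)
  have h₁₂ := P.lastTime_eq_zero_of_eq (v := (1, 0)) (w := (0, 1)) (by decide)
  have h₁₃ := P.lastTime_eq_zero_of_eq (v := (1, 0)) (w := (1, 1)) (by decide)
  have h₁₄ := P.lastTime_eq_zero_of_eq (v := (1, 0)) (w := (1, -1)) (by decide)
  have h₂₃ := P.lastTime_eq_zero_of_eq (v := (0, 1)) (w := (1, 1)) (by decide)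
  have h₂₄ := P.lastTime_eq_zero_of_eq (v := (0, 1)) (w := (1, -1)) (by decide)
  have h₃₄ := P.lastTime_eq_zero_of_eq (v := (1, 1)) (w := (1, -1)) (by decide)
  have hN := P.card_movesIn_add
  omega
end

section
/- In Morpion Solitaire 5D, no play of length 137 exists; equivalently, the score of every play of Morpion Solitaire 5D is at most 136. -/
/-! Each move draws a line of five crosses, and the lines drawn in one direction are pairwise
disjoint, so in a play of length `N` every direction carries at most `⌊(36 + N) / 5⌋` lines: the
board never holds more than the `36` initial crosses and the `N` new ones. With four directions,
`N ≤ 4 ⌊(36 + N) / 5⌋`, which fails for `N = 137`; a longer play would have a prefix of that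
length. -/

open Finset

def segF (q d : ℤ × ℤ) : Finset (ℤ × ℤ) :=
  (range 5).image fun t : ℕ => q + (t : ℤ) • d

@[simp]
lemma coe_segF (q d : ℤ × ℤ) : (segF q d : Set (ℤ × ℤ)) = seg q d := by
  ext x
  simp only [segF, coe_image, coe_range, Set.mem_image, Set.mem_Iio, seg, Set.mem_ofPred_eq]
  exact ⟨fun ⟨t, ht, hx⟩ => ⟨t, by omega, hx.symm⟩, fun ⟨t, ht, hx⟩ => ⟨t, by omega, hx.symm⟩⟩

lemma card_segF (q : ℤ × ℤ) {d : ℤ × ℤ} (hd : d ≠ 0) : #(segF q d) = 5 := by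
  refine (card_image_of_injective _ ?_).trans (card_range 5)
  exact (add_right_injective q).comp ((smul_left_injective ℤ hd).comp Nat.cast_injective)

instance inst_s2 : DecidablePred (· ∈ S0) := fun _ => inferInstanceAs (Decidable (_ ∨ _ ∨ _ ∨ _))

noncomputable def S0F : Finset (ℤ × ℤ) := {p ∈ Icc (0 : ℤ) 9 ×ˢ Icc (0 : ℤ) 9 | p ∈ S0}

lemma card_S0F : #S0F = 36 := by decide

lemma S0_subset_S0F : S0 ⊆ S0F := by
  intro p hp
  have hbox : p ∈ Icc (0 : ℤ) 9 ×ˢ Icc (0 : ℤ) 9 := by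
    simp only [S0, Set.mem_ofPred_eq] at hp
    simp only [mem_product, mem_Icc]
    omega
  exact mem_filter.mpr ⟨hbox, hp⟩

namespace Play

variable {N : ℕ} (P : Play N)

def take {M : ℕ} (h : M ≤ N) : Play M where
  p i := P.p (Fin.castLE h i)
  q i := P.q (Fin.castLE h i)
  d i := P.d (Fin.castLE h i)
  d_mem _ := P.d_mem _
  p_not_S0 _ := P.p_not_S0 _
  p_new _ _ hlt := P.p_new _ _ hlt
  p_mem _ := P.p_mem _
  seg_sub i x hx := by
    rcases P.seg_sub (Fin.castLE h i) hx with hS0 | ⟨j, hj, rfl⟩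
    · exact Or.inl hS0
    · exact Or.inr ⟨⟨j, lt_of_le_of_lt (Fin.le_def.mp hj) i.isLt⟩, hj, rfl⟩
  disj _ _ hlt hd := P.disj _ _ hlt hd

noncomputable def board : Finset (ℤ × ℤ) := S0F ∪ univ.image P.p

lemma card_board_le : #P.board ≤ 36 + N :=
  calc #P.board ≤ #S0F + #(univ.image P.p) := card_union_le _ _
    _ ≤ 36 + N := by
      gcongr
      · exact card_S0F.le
      · exact card_image_le.trans (card_fin N).le

lemma segF_subset_board (i : Fin N) : segF (P.q i) (P.d i) ⊆ P.board := by
  intro x hx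
  have hx : x ∈ seg (P.q i) (P.d i) := by rwa [← coe_segF]
  rcases P.seg_sub i hx with hS0 | ⟨j, -, rfl⟩
  · exact mem_union_left _ (S0_subset_S0F hS0)
  · exact mem_union_right _ (mem_image_of_mem _ (mem_univ j))

lemma disjoint_segF {i j : Fin N} (hij : i ≠ j) (hd : P.d i = P.d j) :
    Disjoint (segF (P.q i) (P.d i)) (segF (P.q j) (P.d j)) := by
  rw [← disjoint_coe, coe_segF, coe_segF, Set.disjoint_iff_inter_eq_empty]
  rcases hij.lt_or_gt with hlt | hlt
  · rw [Set.inter_comm]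
    exact P.disj j i hlt hd
  · exact P.disj i j hlt hd.symm

lemma five_mul_card_filter_d_le (d : ℤ × ℤ) : 5 * #{i | P.d i = d} ≤ 36 + N := by
  set I : Finset (Fin N) := {i | P.d i = d}
  have hI : ∀ i ∈ I, P.d i = d := fun i hi => (mem_filter.mp hi).2
  have hpairwise : (I : Set (Fin N)).PairwiseDisjoint fun i => segF (P.q i) (P.d i) :=
    fun i hi j hj hij => P.disjoint_segF hij ((hI i hi).trans (hI j hj).symm)
  calc 5 * #I = #(I.biUnion fun i => segF (P.q i) (P.d i)) := by
        rw [card_biUnion hpairwise,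
          sum_congr rfl fun i _ => card_segF _ (ne_zero_of_mem_Dir (P.d_mem i)),
          sum_const, smul_eq_mul, mul_comm]
    _ ≤ #P.board := card_le_card (biUnion_subset.mpr fun i _ => P.segF_subset_board i)
    _ ≤ 36 + N := P.card_board_le

lemma le_four_mul_div_five (P : Play N) : N ≤ 4 * ((36 + N) / 5) := by
  set D : Finset (ℤ × ℤ) := {(1, 0), (0, 1), (1, 1), (1, -1)}
  have hmaps : Set.MapsTo P.d (univ : Finset (Fin N)) D := fun i _ => by
    simpa [D, Dir] using P.d_mem i
  calc N = #(univ : Finset (Fin N)) := (card_fin N).symm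
    _ = ∑ d ∈ D, #{i | P.d i = d} := card_eq_sum_card_fiberwise hmaps
    _ ≤ #D • ((36 + N) / 5) :=
        sum_le_card_nsmul _ _ _ fun d _ => by
          have := P.five_mul_card_filter_d_le d
          omega
    _ ≤ 4 * ((36 + N) / 5) := by
        rw [smul_eq_mul]
        gcongr
        exact card_le_four

end Play

/-- In Morpion Solitaire 5D, the score of every play is at most 136;
equivalently, no play of length 137 exists. -/
theorem morpion5D_upper_bound_136 : ∀ N : ℕ, Play N → N ≤ 136 := by
  intro N P
  by_contra! hN
  have := (P.take hN).le_four_mul_div_five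
  omega
end

section
/- For every play of Morpion Solitaire 5D of length N with N ≥ 3, the sum of the potentials (computed with respect to all N lines of the play) of the three crosses p_N, p_{N−1} and p_{N−2} drawn in the last three moves is at least 7, i.e., p(p_N) + p(p_{N−1}) + p(p_{N−2}) ≥ 7. -/
/-- The number of lines of the play covering the point `C`. -/
noncomputable def coverCount {N : ℕ} (P : Play N) (C : ℤ × ℤ) : ℕ :=
  Nat.card {i : Fin N // C ∈ seg (P.q i) (P.d i)}

/-- The potential of a cross `C` after a play of length `N`:
`4` minus the number of lines of the play covering `C`. -/
noncomputable def pot {N : ℕ} (P : Play N) (C : ℤ × ℤ) : ℤ := 4 - coverCount P C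

open Finset

lemma Dir.eq_of_smul_eq_smul {d d' : ℤ × ℤ} (hd : d ∈ Dir) (hd' : d' ∈ Dir) {a b : ℤ}
    (h : a • d = b • d') (ha : a ≠ 0) : d = d' := by
  simp only [Dir, Set.mem_insert_iff, Set.mem_singleton_iff] at hd hd'
  rcases hd with rfl | rfl | rfl | rfl <;> rcases hd' with rfl | rfl | rfl | rfl <;>
    simp_all [Prod.ext_iff] <;> omega

lemma dir_eq_of_seg_inter_nontrivial {q d q' d' : ℤ × ℤ} (hd : d ∈ Dir) (hd' : d' ∈ Dir)
    (h : (seg q d ∩ seg q' d').Nontrivial) : d = d' := by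
  obtain ⟨x, ⟨⟨t, -, rfl⟩, ⟨t', -, hx'⟩⟩, y, ⟨⟨s, -, rfl⟩, ⟨s', -, hy'⟩⟩, hxy⟩ := h
  have hst : (s : ℤ) - t ≠ 0 := fun h0 => hxy (by rw [sub_eq_zero.mp h0])
  refine Dir.eq_of_smul_eq_smul hd hd' (b := (s' : ℤ) - t') ?_ hst
  simpa only [add_sub_add_left_eq_sub, ← sub_smul] using congrArg₂ (· - ·) hy' hx'

namespace Play

variable {N : ℕ} (P : Play N)

lemma p_injective : Function.Injective P.p := by
  intro i j hij
  rcases lt_trichotomy i j with h | h | h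
  · exact absurd hij (P.p_new j i h)
  · exact h
  · exact absurd hij.symm (P.p_new i j h)

lemma le_of_p_mem_seg {i j : Fin N} (h : P.p i ∈ seg (P.q j) (P.d j)) : i ≤ j := by
  rcases P.seg_sub j h with h0 | ⟨k, hkj, hk⟩
  · exact absurd h0 (P.p_not_S0 i)
  · exact P.p_injective hk ▸ hkj

lemma seg_inter_subsingleton {i j : Fin N} (hij : i ≠ j) :
    (seg (P.q i) (P.d i) ∩ seg (P.q j) (P.d j)).Subsingleton := by
  by_contra hnt
  rw [Set.not_subsingleton_iff] at hnt
  have hd := dir_eq_of_seg_inter_nontrivial (P.d_mem i) (P.d_mem j) hnt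
  rcases hij.lt_or_gt with h | h
  · exact hnt.nonempty.ne_empty (Set.inter_comm _ _ ▸ P.disj j i h hd)
  · exact hnt.nonempty.ne_empty (P.disj i j h hd.symm)

lemma p_not_mem_seg_of_mem_seg {i j k : Fin N} (hij : i ≠ j) (hjk : j ≠ k)
    (hj : P.p j ∈ seg (P.q k) (P.d k)) (hi : P.p i ∈ seg (P.q k) (P.d k)) :
    P.p i ∉ seg (P.q j) (P.d j) := fun hij' =>
  hij (P.p_injective (P.seg_inter_subsingleton hjk ⟨hij', hi⟩ ⟨P.p_mem j, hj⟩))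

open scoped Classical in
lemma coverCount_p (i : Fin N) :
    coverCount P (P.p i) = 1 + #{j ∈ Ioi i | P.p i ∈ seg (P.q j) (P.d j)} := by
  have hfilter : {j ∈ (univ : Finset (Fin N)) | P.p i ∈ seg (P.q j) (P.d j)} =
      {j ∈ Ici i | P.p i ∈ seg (P.q j) (P.d j)} := by
    ext j
    simp only [mem_filter, mem_univ, mem_Ici, true_and]
    exact ⟨fun h => ⟨P.le_of_p_mem_seg h, h⟩, And.right⟩
  rw [coverCount, Nat.card_eq_fintype_card, Fintype.card_subtype, hfilter, Ici_eq_cons_Ioi,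
    filter_cons_of_pos (p := fun j => P.p i ∈ seg (P.q j) (P.d j)) _ _ _ (P.p_mem i),
    card_cons, add_comm]

end Play

/-- The sum of the potentials of the crosses drawn in the last three moves
of a play of Morpion Solitaire 5D is at least 7. -/
theorem last_three_potentials (N : ℕ) (hN : 3 ≤ N) (P : Play N) :
    7 ≤ pot P (P.p ⟨N - 1, by omega⟩) + pot P (P.p ⟨N - 2, by omega⟩) +
        pot P (P.p ⟨N - 3, by omega⟩) := by
  set a : Fin N := ⟨N - 1, by omega⟩
  set b : Fin N := ⟨N - 2, by omega⟩
  set c : Fin N := ⟨N - 3, by omega⟩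
  have ha : Ioi a = ∅ := by
    ext j; simp only [mem_Ioi, Fin.lt_def, notMem_empty, iff_false, a]; omega
  have hb : Ioi b = {a} := by
    ext j; simp only [mem_Ioi, mem_singleton, Fin.lt_def, Fin.ext_iff, a, b]; omega
  have hc : Ioi c = {b, a} := by
    ext j; simp only [mem_Ioi, mem_insert, mem_singleton, Fin.lt_def, Fin.ext_iff, a, b, c]; omega
  have hcb : c ≠ b := by simp only [ne_eq, Fin.ext_iff, b, c]; omega
  have hba : b ≠ a := by simp only [ne_eq, Fin.ext_iff, a, b]; omega
  have hnot_all := P.p_not_mem_seg_of_mem_seg hcb hba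
  simp only [pot, Play.coverCount_p, ha, hb, hc, filter_empty, filter_singleton, filter_insert]
  split_ifs <;> simp_all [card_pair hba]
end

section
/- Let N be a positive integer with N ≢ 1 (mod 4) and ⌈N/4⌉ ≡ 2 or 3 (mod 5). Then every 5D-layout of N lines covers at least ⌈N/4⌉ · 5 + 5 lattice points. -/
/-- A 5D-layout of `N` lines: `N` pairwise distinct lines, each in a direction
from `Dir`, such that two distinct lines in the same direction are disjoint. -/
structure Layout (N : ℕ) where
  q : Fin N → ℤ × ℤ
  d : Fin N → ℤ × ℤ
  d_mem : ∀ i, d i ∈ Dir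
  distinct : ∀ i j : Fin N, i ≠ j → seg (q i) (d i) ≠ seg (q j) (d j)
  disj : ∀ i j : Fin N, i ≠ j → d i = d j → seg (q i) (d i) ∩ seg (q j) (d j) = ∅

/-- The set of lattice points covered by the lines of a layout. -/
def Layout.covered {N : ℕ} (L : Layout N) : Set (ℤ × ℤ) := ⋃ i, seg (L.q i) (L.d i)

/-! Reduce lattice points modulo 5. A line in direction `d` meets each of the five residue
classes on which `cross (cell d)` takes its value along the line exactly once, and disjoint lines
of the same direction meet such a class in different points. So the number of lines with a given
direction and a given value of `cross` is at most the number of covered points in each of those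
five classes. Summing over the classes, a layout covering fewer than `5k + 5` points, where
`k = ⌈N/4⌉`, has at most `k` lines in each direction; as `N ≥ 4k - 2`, two directions `d`, `e`
carry exactly `k` lines each. The two families of residue lines are coordinates on `(ℤ/5)²`, and
bounding each class by the larger of its two line counts `a c`, `b c'` gives
`2 · #covered ≥ 10k + ∑ |a c - b c'|`. For each `c'` the inner sum is at least `|k - 5 b c'| ≥ 2`
because `k ≡ 2, 3 (mod 5)`, hence `#covered ≥ 5k + 5`. -/

open Finset Function

namespace Morpion

def cross {R : Type*} [CommRing R] (u v : R × R) : R := u.1 * v.2 - u.2 * v.1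

section Field

variable {F : Type*} [Field F]

lemma exists_eq_smul_of_cross_eq_zero {u w : F × F} (hu : u ≠ 0) (h : cross u w = 0) :
    ∃ s : F, w = s • u := by
  unfold cross at h
  by_cases h1 : u.1 = 0
  · have h2 : u.2 ≠ 0 := fun h2 => hu (Prod.ext h1 h2)
    refine ⟨w.2 / u.2, Prod.ext ?_ ?_⟩
    · simp only [h1, zero_mul, zero_sub, neg_eq_zero, mul_eq_zero, h2, false_or] at h
      simp [h, h1]
    · simp [h2]
  · refine ⟨w.1 / u.1, Prod.ext ?_ ?_⟩
    · simp [h1]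
    · simp only [smul_eq_mul, Prod.smul_snd]
      field_simp
      linear_combination h

lemma cross_pair_injective {u v : F × F} (huv : cross u v ≠ 0) :
    Injective fun z => (cross u z, cross v z) := by
  intro z z' h
  simp only [Prod.mk.injEq, cross] at h
  obtain ⟨hu, hv⟩ := h
  refine Prod.ext (mul_left_cancel₀ huv ?_) (mul_left_cancel₀ huv ?_) <;> unfold cross
  · linear_combination v.1 * hu - u.1 * hv
  · linear_combination v.2 * hu - u.2 * hv

lemma sum_cross_pair [Fintype F] {M : Type*} [AddCommMonoid M] {u v : F × F}
    (huv : cross u v ≠ 0) (f : F × F → M) :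
    ∑ z, f (cross u z, cross v z) = ∑ p, f p :=
  Fintype.sum_bijective _ (cross_pair_injective huv).bijective_of_finite _ _ fun _ => rfl

end Field

instance fact_prime_five : Fact (Nat.Prime 5) := ⟨Nat.prime_five⟩

def cell : ℤ × ℤ →+* ZMod 5 × ZMod 5 := (Int.castRingHom _).prodMap (Int.castRingHom _)

lemma exists_mem_seg_cell_eq {q d : ℤ × ℤ} {z : ZMod 5 × ZMod 5} (hd : cell d ≠ 0)
    (hz : cross (cell d) z = cross (cell d) (cell q)) : ∃ p ∈ seg q d, cell p = z := by
  obtain ⟨s, hs⟩ := exists_eq_smul_of_cross_eq_zero hd (w := z - cell q)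
    (by unfold cross at hz ⊢; simp only [Prod.fst_sub, Prod.snd_sub]; linear_combination hz)
  refine ⟨q + (s.val : ℤ) • d, ⟨s.val, by have := s.val_lt; omega, rfl⟩, ?_⟩
  rw [map_add, map_zsmul, natCast_zsmul, ← Nat.cast_smul_eq_nsmul (ZMod 5), ZMod.natCast_zmod_val,
    ← hs, add_sub_cancel]

lemma seg_finite (q d : ℤ × ℤ) : (seg q d).Finite := by
  refine ((Set.finite_Iic 4).image fun t : ℕ => q + (t : ℤ) • d).subset ?_
  rintro _ ⟨t, ht, rfl⟩
  exact ⟨t, ht, rfl⟩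

def dirFinset : Finset (ℤ × ℤ) := {(1, 0), (0, 1), (1, 1), (1, -1)}

lemma cross_cell_ne_zero {d e : ℤ × ℤ} (hd : d ∈ dirFinset) (he : e ∈ dirFinset) (hne : d ≠ e) :
    cross (cell d) (cell e) ≠ 0 := by
  simp only [dirFinset, mem_insert, mem_singleton] at hd he
  rcases hd with rfl | rfl | rfl | rfl <;> rcases he with rfl | rfl | rfl | rfl <;>
    first | exact absurd rfl hne | decide

lemma exists_ne_of_sum_add_two_le {α : Type*} {s : Finset α} {f : α → ℕ} {k : ℕ}
    (hf : ∀ x ∈ s, f x ≤ k) (hsum : #s * k + 2 ≤ ∑ x ∈ s, f x + #s) :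
    ∃ x ∈ s, ∃ y ∈ s, x ≠ y ∧ f x = k ∧ f y = k := by
  have hlt : ∑ x ∈ s, f x + #{x ∈ s | ¬f x = k} ≤ #s * k := by
    rw [card_filter, ← sum_add_distrib, ← smul_eq_mul, ← sum_const]
    exact sum_le_sum fun x hx => by have := hf x hx; split_ifs <;> omega
  have hcard := card_filter_add_card_filter_not (s := s) (fun x => f x = k)
  obtain ⟨x, hx, y, hy, hne⟩ := one_lt_card.1 (by omega : 1 < #{x ∈ s | f x = k})
  simp only [mem_filter] at hx hy
  exact ⟨x, hx.1, y, hy.1, hne, hx.2, hy.2⟩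

lemma sum_abs_sum_sub_le {ι : Type*} [Fintype ι] (a b : ι → ℤ) :
    ∑ j, |∑ i, a i - Fintype.card ι * b j| ≤ ∑ i, ∑ j, |a i - b j| := by
  rw [sum_comm]
  refine sum_le_sum fun j _ => ?_
  rw [← card_univ, ← nsmul_eq_mul, ← sum_const, ← sum_sub_distrib]
  exact abs_sum_le_sum_abs _ _

lemma ten_add_le_two_mul_sum_max {ι : Type*} [Fintype ι] (hι : Fintype.card ι = 5)
    (a b : ι → ℕ) (ha : (∑ i, a i) % 5 = 2 ∨ (∑ i, a i) % 5 = 3) :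
    5 * ∑ i, a i + 5 * ∑ j, b j + 10 ≤ 2 * ∑ i, ∑ j, max (a i) (b j) := by
  have hmax : ∀ x y : ℤ, 2 * max x y = x + y + |x - y| := by
    intro x y
    rcases le_total x y with h | h
    · rw [max_eq_right h, abs_of_nonpos (by linarith)]; ring
    · rw [max_eq_left h, abs_of_nonneg (by linarith)]; ring
  have hgap : ∀ j, (2 : ℤ) ≤ |∑ i, (a i : ℤ) - Fintype.card ι * b j| := by
    intro j
    rw [hι, ← Nat.cast_sum, le_abs']
    omega
  have hsum := (sum_le_sum fun j _ => hgap j).trans (sum_abs_sum_sub_le (a ·) (b ·))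
  zify
  simp only [mul_sum, hmax, sum_add_distrib, sum_const, card_univ, hι, nsmul_eq_mul] at hsum ⊢
  simp only [← mul_sum] at hsum ⊢
  push_cast at hsum ⊢
  linarith

end Morpion

namespace Layout

open Morpion

variable {N : ℕ} (L : Layout N)

def lineCount (d : ℤ × ℤ) (c : ZMod 5) : ℕ :=
  #{i | L.d i = d ∧ cross (cell d) (cell (L.q i)) = c}

noncomputable def cellCount (z : ZMod 5 × ZMod 5) : ℕ := {p ∈ L.covered | cell p = z}.ncard

lemma covered_finite : L.covered.Finite := Set.finite_iUnion fun _ => seg_finite _ _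

lemma sum_cellCount : ∑ z, L.cellCount z = L.covered.ncard := by
  rw [Set.ncard_eq_toFinset_card _ L.covered_finite,
    card_eq_sum_card_fiberwise (f := cell) (t := univ) fun _ _ => mem_univ _]
  refine sum_congr rfl fun z _ => ?_
  simp only [cellCount, ← Set.ncard_coe_finset, coe_filter, Set.Finite.mem_toFinset]

lemma sum_sum_lineCount : ∑ d ∈ dirFinset, ∑ c, L.lineCount d c = N := by
  have hmem : ∀ i ∈ (univ : Finset (Fin N)),
      (L.d i, cross (cell (L.d i)) (cell (L.q i))) ∈ dirFinset ×ˢ (univ : Finset (ZMod 5)) :=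
    fun i _ => mem_product.2 ⟨by simpa [dirFinset, Dir] using L.d_mem i, mem_univ _⟩
  conv_rhs => rw [← Fintype.card_fin N, ← card_univ, card_eq_sum_card_fiberwise hmem, sum_product]
  refine sum_congr rfl fun d _ => sum_congr rfl fun c _ => congrArg card (filter_congr ?_)
  rintro i -
  constructor
  · rintro ⟨rfl, rfl⟩; rfl
  · rintro h; cases h; exact ⟨rfl, rfl⟩

lemma lineCount_le_cellCount {d : ℤ × ℤ} (hd : cell d ≠ 0) (z : ZMod 5 × ZMod 5) :
    L.lineCount d (cross (cell d) z) ≤ L.cellCount z := by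
  have hmeet : ∀ i ∈ {i | L.d i = d ∧ cross (cell d) (cell (L.q i)) = cross (cell d) z},
      ∃ p ∈ seg (L.q i) (L.d i), cell p = z := by
    rintro i ⟨rfl, hi⟩
    exact exists_mem_seg_cell_eq hd hi.symm
  choose! pt hpt_mem hpt_cell using hmeet
  rw [lineCount, ← Set.ncard_coe_finset, coe_filter_univ]
  refine Set.ncard_le_ncard_of_injOn pt
    (fun i hi => ⟨Set.mem_iUnion.2 ⟨i, hpt_mem i hi⟩, hpt_cell i hi⟩) ?_
    (L.covered_finite.subset fun _ hp => hp.1)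
  intro i hi j hj hij
  by_contra hne
  exact (L.disj i j hne (hi.1.trans hj.1.symm)).subset ⟨hpt_mem i hi, hij ▸ hpt_mem j hj⟩

lemma sum_max_lineCount_le {d e : ℤ × ℤ} (hde : cross (cell d) (cell e) ≠ 0) :
    ∑ c, ∑ c', max (L.lineCount d c) (L.lineCount e c') ≤ L.covered.ncard := by
  have hd : cell d ≠ 0 := fun h => hde (by simp [h, cross])
  have he : cell e ≠ 0 := fun h => hde (by simp [h, cross])
  rw [← Fintype.sum_prod_type', ← sum_cross_pair hde, ← L.sum_cellCount]
  exact sum_le_sum fun z _ =>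
    max_le (L.lineCount_le_cellCount hd z) (L.lineCount_le_cellCount he z)

lemma five_mul_sum_lineCount_le {d e : ℤ × ℤ} (hde : cross (cell d) (cell e) ≠ 0) :
    5 * ∑ c, L.lineCount d c ≤ L.covered.ncard :=
  calc 5 * ∑ c, L.lineCount d c = ∑ c, ∑ _c' : ZMod 5, L.lineCount d c := by simp [mul_sum]
    _ ≤ ∑ c, ∑ c', max (L.lineCount d c) (L.lineCount e c') :=
      sum_le_sum fun _ _ => sum_le_sum fun _ _ => le_max_left _ _
    _ ≤ L.covered.ncard := L.sum_max_lineCount_le hde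

end Layout

open Morpion

/-- `(N + 3) / 4` is `⌈N/4⌉` in natural-number arithmetic. -/
theorem layout_covers_ceil_plus_five_general (N : ℕ) (h4 : N % 4 ≠ 1)
    (h5 : ((N + 3) / 4) % 5 = 2 ∨ ((N + 3) / 4) % 5 = 3) (L : Layout N) :
    ((N + 3) / 4) * 5 + 5 ≤ L.covered.ncard := by
  set k := (N + 3) / 4
  by_contra! hlt
  have hdir : ∀ d ∈ dirFinset, ∑ c, L.lineCount d c ≤ k := by
    intro d hd
    obtain ⟨e, he, hne⟩ := exists_mem_ne (by decide : 1 < #dirFinset) d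
    have := L.five_mul_sum_lineCount_le (cross_cell_ne_zero hd he hne.symm)
    omega
  obtain ⟨d, hd, e, he, hne, hdk, hek⟩ := exists_ne_of_sum_add_two_le hdir
    (by rw [L.sum_sum_lineCount, show #dirFinset = 4 by decide]; omega)
  have hmax := L.sum_max_lineCount_le (cross_cell_ne_zero hd he hne)
  have hgap := ten_add_le_two_mul_sum_max (ZMod.card 5) (L.lineCount d) (L.lineCount e)
    (hdk ▸ h5)
  omega

/-- If `N ≢ 1 (mod 4)` and `⌈N/4⌉ ≡ 2` or `3 (mod 5)`, then every 5D-layout of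
`N` lines covers at least `⌈N/4⌉ · 5 + 5` lattice points.
(Here `(N + 3) / 4` is the ceiling `⌈N/4⌉` in natural-number arithmetic.) -/
theorem layout_covers_ceil_plus_five (N : ℕ) (hpos : 0 < N) (h4 : N % 4 ≠ 1)
    (h5 : ((N + 3) / 4) % 5 = 2 ∨ ((N + 3) / 4) % 5 = 3) (L : Layout N) :
    ((N + 3) / 4) * 5 + 5 ≤ L.covered.ncard :=
  layout_covers_ceil_plus_five_general N h4 h5 L
end

section
/- For every integer N with 1 ≤ N ≤ 102 there exists a 5D-layout of N lines whose union covers at most N + 36 lattice points. Consequently, the Board Infeasibility Condition (that every 5D-layout of N lines covers more than N + 36 points) fails for all N ≤ 102, so the line-based counting approach cannot prove any upper bound on the Morpion Solitaire 5D score smaller than 102. -/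
/-
The witness is one explicit layout of 102 lines inside the strip `[0, 4] × [0, 29]`, listed so
that the first `N` lines only cover points among the first `N + 36` entries of a fixed
enumeration of 138 points. Its first `N` lines then form the required layout for every
`N ≤ 102`. Distinctness of the lines comes for free: lines of equal direction in it are disjoint,
and a line determines its direction.
-/

theorem mem_seg_self (q d : ℤ × ℤ) : q ∈ seg q d := ⟨0, by norm_num, by simp⟩

theorem add_mem_seg (q d : ℤ × ℤ) : q + d ∈ seg q d := ⟨1, by norm_num, by simp⟩

theorem seg_subset_iff {q d : ℤ × ℤ} {s : Set (ℤ × ℤ)} :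
    seg q d ⊆ s ↔ ∀ t : ℕ, t ≤ 4 → q + (t : ℤ) • d ∈ s := by
  simp only [Set.subset_def, seg, Set.mem_ofPred_eq]
  exact ⟨fun h t ht => h _ ⟨t, ht, rfl⟩, fun h _ ⟨t, ht, hx⟩ => hx ▸ h t ht⟩

theorem disjoint_seg_iff {q d q' d' : ℤ × ℤ} :
    Disjoint (seg q d) (seg q' d') ↔
      ∀ s : ℕ, s ≤ 4 → ∀ t : ℕ, t ≤ 4 → q + (s : ℤ) • d ≠ q' + (t : ℤ) • d' := by
  simp only [Set.disjoint_left, seg, Set.mem_ofPred_eq, not_exists, not_and]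
  exact ⟨fun h s hs t ht he => h ⟨s, hs, rfl⟩ t ht he,
    fun h _ ⟨s, hs, hx⟩ t ht he => h s hs t ht (hx ▸ he)⟩

theorem dir_eq_of_seg_eq {q d q' d' : ℤ × ℤ} (hd : d ∈ Dir) (hd' : d' ∈ Dir)
    (h : seg q d = seg q' d') : d = d' := by
  obtain ⟨s, -, hs⟩ : q ∈ seg q' d' := h ▸ mem_seg_self q d
  obtain ⟨t, -, ht⟩ : q + d ∈ seg q' d' := h ▸ add_mem_seg q d
  have hdt : d = ((t : ℤ) - s) • d' :=
    calc d = (q + d) - q := by abel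
      _ = ((t : ℤ) - s) • d' := by rw [ht, hs, sub_smul]; abel
  simp only [Dir, Set.mem_insert_iff, Set.mem_singleton_iff] at hd hd'
  rcases hd with rfl | rfl | rfl | rfl <;> rcases hd' with rfl | rfl | rfl | rfl <;>
    simp only [Prod.ext_iff, Prod.smul_mk, smul_eq_mul] at hdt ⊢ <;> omega

namespace Layout

def ofDisjoint {N : ℕ} (q d : Fin N → ℤ × ℤ) (hd : ∀ i, d i ∈ Dir)
    (hdisj : ∀ i j, i ≠ j → d i = d j → Disjoint (seg (q i) (d i)) (seg (q j) (d j))) :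
    Layout N where
  q := q
  d := d
  d_mem := hd
  distinct i j hij heq :=
    Set.disjoint_left.mp (hdisj i j hij (dir_eq_of_seg_eq (hd i) (hd j) heq))
      (mem_seg_self _ _) (heq ▸ mem_seg_self _ _)
  disj i j hij hdij := Set.disjoint_iff_inter_eq_empty.mp (hdisj i j hij hdij)

def restrict {M N : ℕ} (L : Layout M) (h : N ≤ M) : Layout N where
  q i := L.q (Fin.castLE h i)
  d i := L.d (Fin.castLE h i)
  d_mem _ := L.d_mem _
  distinct _ _ hij := L.distinct _ _ ((Fin.castLE_injective h).ne hij)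
  disj _ _ hij := L.disj _ _ ((Fin.castLE_injective h).ne hij)

theorem ncard_covered_le {N : ℕ} (L : Layout N) (pts : List (ℤ × ℤ)) (k : ℕ)
    (h : ∀ i : Fin N, seg (L.q i) (L.d i) ⊆ {x | x ∈ pts.take (i + k + 1)}) :
    L.covered.ncard ≤ N + k := by
  have hsub : L.covered ⊆ ((pts.take (N + k)).toFinset : Set (ℤ × ℤ)) := by
    refine Set.iUnion_subset fun i x hx => ?_
    simpa using List.take_subset_take_left pts (by omega) (h i hx)
  calc L.covered.ncard ≤ (pts.take (N + k)).toFinset.card :=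
        Set.ncard_coe_finset _ ▸ Set.ncard_le_ncard hsub (Finset.finite_toSet _)
    _ ≤ (pts.take (N + k)).length := List.toFinset_card_le _
    _ ≤ N + k := List.length_take_le _ _

end Layout

def layout102Lines : List ((ℤ × ℤ) × (ℤ × ℤ)) := [
  ((0, 15), (1, 0)), ((4, 11), (0, 1)), ((0, 15), (1, -1)), ((0, 13), (1, 1)), ((3, 12), (0, 1)),
  ((0, 13), (1, 0)), ((0, 11), (1, 1)), ((1, 11), (0, 1)), ((0, 14), (1, 0)), ((0, 16), (1, -1)),
  ((0, 11), (1, 0)), ((0, 9), (1, 1)), ((2, 12), (0, 1)), ((0, 12), (1, 0)), ((0, 12), (1, 1)),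
  ((0, 10), (0, 1)), ((0, 10), (1, 1)), ((0, 14), (1, -1)), ((0, 16), (1, 0)), ((0, 17), (1, -1)),
  ((0, 10), (1, 0)), ((0, 13), (1, -1)), ((0, 18), (1, -1)), ((0, 15), (0, 1)), ((0, 19), (1, -1)),
  ((0, 17), (1, 0)), ((0, 14), (1, 1)), ((4, 16), (0, 1)), ((0, 15), (1, 1)), ((0, 18), (1, 0)),
  ((0, 16), (1, 1)), ((3, 17), (0, 1)), ((0, 17), (1, 1)), ((0, 19), (1, 0)), ((1, 16), (0, 1)),
  ((0, 21), (1, -1)), ((0, 20), (1, -1)), ((0, 20), (1, 0)), ((0, 18), (1, 1)), ((2, 17), (0, 1)),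
  ((0, 21), (1, 0)), ((0, 22), (1, -1)), ((0, 20), (0, 1)), ((0, 23), (1, -1)), ((0, 12), (1, -1)),
  ((3, 7), (0, 1)), ((0, 11), (1, -1)), ((4, 6), (0, 1)), ((0, 9), (1, 0)), ((0, 8), (1, 1)),
  ((0, 10), (1, -1)), ((0, 8), (1, 0)), ((0, 7), (1, 1)), ((2, 7), (0, 1)), ((0, 7), (1, 0)),
  ((1, 6), (0, 1)), ((0, 5), (1, 1)), ((0, 6), (1, 1)), ((0, 5), (0, 1)), ((0, 6), (1, 0)),
  ((0, 9), (1, -1)), ((0, 8), (1, -1)), ((0, 5), (1, 0)), ((0, 4), (1, 1)), ((0, 7), (1, -1)),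
  ((0, 22), (1, 0)), ((0, 24), (1, -1)), ((0, 19), (1, 1)), ((1, 21), (0, 1)), ((0, 23), (1, 0)),
  ((0, 25), (1, -1)), ((0, 20), (1, 1)), ((4, 21), (0, 1)), ((0, 21), (1, 1)), ((0, 24), (1, 0)),
  ((0, 26), (1, -1)), ((0, 4), (1, 0)), ((0, 3), (1, 1)), ((0, 6), (1, -1)), ((3, 2), (0, 1)),
  ((4, 1), (0, 1)), ((0, 5), (1, -1)), ((2, 2), (0, 1)), ((0, 3), (1, 0)), ((0, 2), (1, 1)),
  ((0, 2), (1, 0)), ((0, 1), (1, 1)), ((1, 1), (0, 1)), ((0, 0), (0, 1)), ((0, 0), (1, 1)),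
  ((2, 22), (0, 1)), ((0, 25), (1, 0)), ((0, 22), (1, 1)), ((3, 22), (0, 1)), ((0, 23), (1, 1)),
  ((0, 26), (1, 0)), ((0, 27), (1, -1)), ((0, 24), (1, 1)), ((0, 25), (0, 1)), ((0, 28), (1, -1)),
  ((0, 27), (1, 0)), ((0, 29), (1, -1))]

def layout102Points : List (ℤ × ℤ) := [
  (0, 15), (1, 15), (2, 15), (3, 15), (4, 15), (4, 11), (4, 12), (4, 13), (4, 14), (1, 14),
  (2, 13), (3, 12), (0, 13), (3, 16), (4, 17), (3, 13), (3, 14), (1, 13), (0, 11), (1, 12),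
  (1, 11), (0, 14), (2, 14), (0, 16), (2, 11), (3, 11), (0, 9), (1, 10), (2, 12), (2, 16),
  (0, 12), (4, 16), (0, 10), (4, 10), (1, 16), (0, 17), (2, 10), (3, 10), (4, 9), (0, 18),
  (1, 17), (0, 19), (1, 18), (2, 17), (3, 17), (4, 18), (4, 19), (4, 20), (3, 18), (2, 18),
  (3, 19), (3, 20), (3, 21), (2, 19), (4, 21), (1, 19), (1, 20), (0, 21), (0, 20), (2, 20),
  (4, 22), (2, 21), (1, 21), (0, 22), (0, 23), (0, 24), (1, 22), (3, 9), (4, 8), (3, 7),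
  (3, 8), (2, 9), (4, 7), (4, 6), (1, 9), (0, 8), (2, 8), (1, 8), (0, 7), (2, 7),
  (1, 7), (1, 6), (0, 5), (0, 6), (2, 6), (3, 6), (4, 5), (3, 5), (4, 4), (1, 5),
  (2, 5), (0, 4), (3, 4), (4, 3), (2, 22), (3, 22), (1, 23), (4, 23), (1, 24), (1, 25),
  (2, 23), (3, 23), (0, 25), (4, 24), (4, 25), (3, 24), (2, 24), (0, 26), (1, 4), (2, 4),
  (0, 3), (3, 3), (4, 2), (3, 2), (4, 1), (2, 3), (2, 2), (1, 3), (0, 2), (1, 2),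
  (0, 1), (1, 1), (0, 0), (2, 25), (2, 26), (3, 25), (4, 26), (3, 26), (4, 27), (1, 26),
  (0, 27), (3, 27), (4, 28), (0, 28), (0, 29), (1, 27), (2, 27), (1, 28)]

def layout102Base (i : Fin 102) : ℤ × ℤ := (layout102Lines.getD i 0).1

def layout102Dir (i : Fin 102) : ℤ × ℤ := (layout102Lines.getD i 0).2

theorem layout102Dir_mem : ∀ i, layout102Dir i ∈ Dir := by
  simp only [Dir, Set.mem_insert_iff, Set.mem_singleton_iff]
  decide +kernel

theorem layout102_disjoint : ∀ i j, i ≠ j → layout102Dir i = layout102Dir j →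
    Disjoint (seg (layout102Base i) (layout102Dir i)) (seg (layout102Base j) (layout102Dir j)) := by
  simp only [disjoint_seg_iff]
  decide +kernel

theorem layout102_seg_subset : ∀ i : Fin 102,
    seg (layout102Base i) (layout102Dir i) ⊆ {x | x ∈ layout102Points.take (i + 36 + 1)} := by
  simp only [seg_subset_iff, Set.mem_ofPred_eq]
  decide +kernel

def layout102 : Layout 102 :=
  .ofDisjoint layout102Base layout102Dir layout102Dir_mem layout102_disjoint

theorem exists_small_layout_general (N : ℕ) (h2 : N ≤ 102) :
    (∃ L : Layout N, L.covered.ncard ≤ N + 36) ∧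
    ¬(∀ L : Layout N, N + 36 < L.covered.ncard) := by
  have hL : (layout102.restrict h2).covered.ncard ≤ N + 36 :=
    Layout.ncard_covered_le _ layout102Points 36 fun i => layout102_seg_subset (Fin.castLE h2 i)
  exact ⟨⟨_, hL⟩, fun h => (h _).not_ge hL⟩

/-- For every `1 ≤ N ≤ 102` there is a 5D-layout of `N` lines covering at most
`N + 36` lattice points; consequently the Board Infeasibility Condition fails
for all such `N`, so the line-based approach cannot prove an upper bound on
the 5D score smaller than `102`. -/
theorem exists_small_layout (N : ℕ) (h1 : 1 ≤ N) (h2 : N ≤ 102) :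
    (∃ L : Layout N, L.covered.ncard ≤ N + 36) ∧
    ¬(∀ L : Layout N, N + 36 < L.covered.ncard) :=
  exists_small_layout_general N h2
end
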